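/- Let Ĉ be the stochastic SC decoder: a random vector on a common probability space with (X,Y) such that Ĉ_i = C_i for every i ∈ I1 and, for each i ∈ I0, conditionally on (Ĉ_1^{i−1}, Y) the symbol Ĉ_i has distribution μ_{C_i|C_1^{i−1}Y}(· | Ĉ_1^{i−1}, Y) and is conditionally independent of X. Let E ≡ Prob(T^{−1}(Ĉ) ≠ X). If E ≤ 1/2, then Σ_{i∈I0} H(C_i | C_1^{i−1}, Y) ≤ n·(E + h(E)), where H denotes conditional Shannon entropy with logarithm base |𝒳| and h(θ) ≡ −θ log_{|𝒳|} θ − (1−θ) log_{|𝒳|}(1−θ) is the binary entropy function (with h(0) = 0). -/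

import Mathlib

open Finset

noncomputable def probOf {Ω : Type*} [Fintype Ω] (p : Ω → ℝ) (E : Set Ω) : ℝ :=
  ∑ ω, E.indicator p ω

noncomputable def condProb {Ω : Type*} [Fintype Ω] (p : Ω → ℝ) (E F : Set Ω) : ℝ :=
  probOf p (E ∩ F) / probOf p F

noncomputable def entropyOf {Ω Z : Type*} [Fintype Ω] [Fintype Z] (p : Ω → ℝ) (V : Ω → Z) : ℝ :=
  ∑ z, Real.negMulLog (probOf p {ω | V ω = z})

noncomputable def condEntropyOf {Ω U V : Type*} [Fintype Ω] [Fintype U] [Fintype V]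
    (p : Ω → ℝ) (Uv : Ω → U) (Vv : Ω → V) : ℝ :=
  entropyOf p (fun ω => (Uv ω, Vv ω)) - entropyOf p Vv

def prefixVec {𝒳 : Type*} {n : ℕ} (c : Fin n → 𝒳) (m : ℕ) (h : m ≤ n) : Fin m → 𝒳 :=
  fun k => c ⟨k.1, lt_of_lt_of_le k.2 h⟩

def scVecGo {𝒳 : Type*} {n : ℕ} (g : (i : Fin n) → (Fin i.1 → 𝒳) → 𝒳) :
    (k : ℕ) → k < n → 𝒳
  | k, hk => g ⟨k, hk⟩ (fun j => scVecGo g j.1 (j.2.trans hk))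
termination_by k _ => k
decreasing_by exact j.2

def scVec {𝒳 : Type*} {n : ℕ} (g : (i : Fin n) → (Fin i.1 → 𝒳) → 𝒳) : Fin n → 𝒳 :=
  fun i => scVecGo g i.1 i.2

def scDec {𝒳 𝒴 : Type*} {n l : ℕ}
    (I1 : Finset (Fin n)) (hc1 : I1.card = l)
    (f : (i : Fin n) → (Fin i.1 → 𝒳) → (Fin n → 𝒴) → 𝒳)
    (c : Fin l → 𝒳) (y : Fin n → 𝒴) : Fin n → 𝒳 :=
  scVec (fun i pref => if h : i ∈ I1 then c ((I1.orderIsoOfFin hc1).symm ⟨i, h⟩) else f i pref y)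

def scDecOrd {𝒳 𝒴 : Type*} {n l : ℕ}
    (f : (i : Fin n) → (Fin i.1 → 𝒳) → (Fin n → 𝒴) → 𝒳)
    (c : Fin l → 𝒳) (y : Fin n → 𝒴) : Fin n → 𝒳 :=
  scVec (fun i pref => if h : i.1 < l then c ⟨i.1, h⟩ else f i pref y)

/-!
Fix a coordinate `i ∈ I0`. Whenever `T⁻¹ Ĉ = X`, the decoder has in particular reproduced the
correct context `(C_1^{i-1}, Y)` and then drawn the correct symbol `C_i`, which it samples from the
posterior of `C_i` given that context. Hence a posterior sample hits `C_i` with probability at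
least `1 - E`. The maximum-a-posteriori guess does at least as well, so its error probability `e`
satisfies `e ≤ E ≤ 1/2`, and Fano's inequality `H(C_i | C_1^{i-1}, Y) ≤ h(e) + e log |𝒳|` together
with the monotonicity of `h` on `[0, 1/2]` bounds every summand by `E + h(E) / log |𝒳|`. There are
at most `n` summands.
-/

open Real

section FiniteProbability

variable {Ω : Type*} [Fintype Ω] {p : Ω → ℝ}

lemma probOf_nonneg (hp0 : ∀ ω, 0 ≤ p ω) (A : Set Ω) : 0 ≤ probOf p A :=
  sum_nonneg fun ω _ => Set.indicator_nonneg (fun ω _ => hp0 ω) ω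

lemma probOf_mono (hp0 : ∀ ω, 0 ≤ p ω) {A B : Set Ω} (h : A ⊆ B) :
    probOf p A ≤ probOf p B :=
  sum_le_sum fun ω _ => Set.indicator_le_indicator_of_subset h (fun _ => hp0 _) ω

lemma probOf_eq_zero_of_subset (hp0 : ∀ ω, 0 ≤ p ω) {A B : Set Ω} (h : A ⊆ B)
    (hB : probOf p B = 0) : probOf p A = 0 :=
  le_antisymm (hB ▸ probOf_mono hp0 h) (probOf_nonneg hp0 A)

lemma probOf_compl (hp1 : ∑ ω, p ω = 1) (A : Set Ω) : probOf p Aᶜ = 1 - probOf p A := by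
  rw [probOf, probOf, Set.indicator_compl, ← hp1, ← sum_sub_distrib]
  rfl

lemma sum_probOf_inter_fiber_mul {Z : Type*} [Fintype Z] (A : Set Ω) (W : Ω → Z)
    (g : Z → ℝ) :
    ∑ z, probOf p (A ∩ {ω | W ω = z}) * g z = ∑ ω, A.indicator p ω * g (W ω) := by
  classical
  simp only [probOf, sum_mul]
  rw [sum_comm]
  refine sum_congr rfl fun ω _ => ?_
  rw [sum_eq_single (W ω) (fun z _ hz => by simp [Set.indicator, Ne.symm hz]) (by simp)]
  simp [Set.indicator]

lemma sum_probOf_fiber_mul {Z : Type*} [Fintype Z] (W : Ω → Z) (g : Z → ℝ) :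
    ∑ z, probOf p {ω | W ω = z} * g z = ∑ ω, p ω * g (W ω) := by
  simpa using sum_probOf_inter_fiber_mul (p := p) Set.univ W g

lemma sum_probOf_inter_fiber {Z : Type*} [Fintype Z] (A : Set Ω) (W : Ω → Z) :
    ∑ z, probOf p (A ∩ {ω | W ω = z}) = probOf p A := by
  simpa [probOf] using sum_probOf_inter_fiber_mul (p := p) A W 1

lemma sum_probOf_fiber {Z : Type*} [Fintype Z] (hp1 : ∑ ω, p ω = 1) (W : Ω → Z) :
    ∑ z, probOf p {ω | W ω = z} = 1 := by
  simpa [hp1] using sum_probOf_fiber_mul (p := p) W 1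

lemma condProb_nonneg (hp0 : ∀ ω, 0 ≤ p ω) (A B : Set Ω) : 0 ≤ condProb p A B :=
  div_nonneg (probOf_nonneg hp0 _) (probOf_nonneg hp0 _)

lemma condProb_le_one (hp0 : ∀ ω, 0 ≤ p ω) (A B : Set Ω) : condProb p A B ≤ 1 :=
  div_le_one_of_le₀ (probOf_mono hp0 Set.inter_subset_right) (probOf_nonneg hp0 B)

lemma probOf_mul_condProb (hp0 : ∀ ω, 0 ≤ p ω) (A B : Set Ω) :
    probOf p B * condProb p A B = probOf p (A ∩ B) := by
  by_cases hB : probOf p B = 0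
  · rw [hB, zero_mul, probOf_eq_zero_of_subset hp0 Set.inter_subset_right hB]
  · exact mul_div_cancel₀ _ hB

lemma sum_condProb_fiber {α : Type*} [Fintype α] (U : Ω → α) {B : Set Ω}
    (hB : probOf p B ≠ 0) : ∑ a, condProb p {ω | U ω = a} B = 1 := by
  simp only [condProb, ← sum_div, Set.inter_comm _ B, sum_probOf_inter_fiber, div_self hB]

lemma sum_probOf_mul_condProb_comp {α β : Type*} [Fintype α] [Fintype β]
    (hp0 : ∀ ω, 0 ≤ p ω) (U : Ω → α) (V : Ω → β) (φ : β → α) :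
    ∑ v, probOf p {ω | V ω = v} * condProb p {ω | U ω = φ v} {ω | V ω = v} =
      probOf p {ω | U ω = φ (V ω)} := by
  rw [← sum_probOf_inter_fiber _ V]
  refine sum_congr rfl fun v _ => ?_
  rw [probOf_mul_condProb hp0]
  congr 1
  ext ω
  simp +contextual

end FiniteProbability

section Entropy

lemma sum_negMulLog_le {α : Type*} (s : Finset α) {x : α → ℝ} (hx : ∀ a ∈ s, 0 ≤ x a) :
    ∑ a ∈ s, negMulLog (x a) ≤
      negMulLog (∑ a ∈ s, x a) + (∑ a ∈ s, x a) * log s.card := by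
  rcases s.eq_empty_or_nonempty with rfl | hs
  · simp
  have hk : (0 : ℝ) < s.card := by exact_mod_cast s.card_pos.mpr hs
  have hjensen := concaveOn_negMulLog.le_map_sum (t := s) (w := fun _ => (s.card : ℝ)⁻¹)
    (p := x) (fun _ _ => by positivity) (by simp [hk.ne']) hx
  simp only [smul_eq_mul, ← mul_sum] at hjensen
  calc ∑ a ∈ s, negMulLog (x a)
      = s.card * ((s.card : ℝ)⁻¹ * ∑ a ∈ s, negMulLog (x a)) := by field_simp
    _ ≤ s.card * negMulLog ((s.card : ℝ)⁻¹ * ∑ a ∈ s, x a) := by gcongr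
    _ = negMulLog (∑ a ∈ s, x a) + (∑ a ∈ s, x a) * log s.card := by
      rw [negMulLog_mul, negMulLog, log_inv]
      field_simp
      ring

lemma sum_negMulLog_le_binEntropy_add {α : Type*} [Fintype α] {g : α → ℝ}
    (h0 : ∀ a, 0 ≤ g a) (h1 : ∑ a, g a = 1) (a₀ : α) :
    ∑ a, negMulLog (g a) ≤ binEntropy (1 - g a₀) + (1 - g a₀) * log (Fintype.card α) := by
  classical
  have hrest : ∑ a ∈ univ.erase a₀, g a = 1 - g a₀ := by
    rw [sum_erase_eq_sub (mem_univ a₀), h1]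
  have hcard : log (univ.erase a₀).card ≤ log (Fintype.card α) := by
    rw [card_erase_of_mem (mem_univ a₀), card_univ]
    rcases Nat.eq_zero_or_pos (Fintype.card α - 1) with h | h
    · simpa [h] using log_natCast_nonneg (Fintype.card α)
    · exact log_le_log (by exact_mod_cast h) (by exact_mod_cast Nat.sub_le _ _)
  have hrest0 : 0 ≤ 1 - g a₀ := hrest ▸ sum_nonneg fun a _ => h0 a
  have hmass := sum_negMulLog_le (univ.erase a₀) fun a _ => h0 a
  rw [hrest] at hmass
  rw [← add_sum_erase _ _ (mem_univ a₀), binEntropy_eq_negMulLog_add_negMulLog_one_sub,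
    sub_sub_cancel]
  nlinarith

lemma condEntropyOf_eq_sum {Ω α β : Type*} [Fintype Ω] [Fintype α] [Fintype β] {p : Ω → ℝ}
    (hp0 : ∀ ω, 0 ≤ p ω) (U : Ω → α) (V : Ω → β) :
    condEntropyOf p U V = ∑ v, probOf p {ω | V ω = v} *
      ∑ a, negMulLog (condProb p {ω | U ω = a} {ω | V ω = v}) := by
  have hjoint : ∀ v, ∑ a, negMulLog (probOf p {ω | (U ω, V ω) = (a, v)}) =
      negMulLog (probOf p {ω | V ω = v}) + probOf p {ω | V ω = v} *
        ∑ a, negMulLog (condProb p {ω | U ω = a} {ω | V ω = v}) := by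
    intro v
    have hsplit : ∀ a, probOf p {ω | (U ω, V ω) = (a, v)} =
        probOf p {ω | V ω = v} * condProb p {ω | U ω = a} {ω | V ω = v} := by
      intro a
      rw [probOf_mul_condProb hp0]
      congr 1
      ext ω
      simp
    simp only [hsplit, negMulLog_mul, sum_add_distrib, ← sum_mul, ← mul_sum]
    by_cases hv : probOf p {ω | V ω = v} = 0
    · simp [hv]
    · rw [sum_condProb_fiber U hv, one_mul]
  rw [condEntropyOf, entropyOf, entropyOf, Fintype.sum_prod_type, sum_comm]
  simp only [hjoint, sum_add_distrib, add_sub_cancel_left]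

end Entropy

section Fano

variable {Ω α β : Type*} [Fintype Ω] [Fintype α] [Fintype β] {p : Ω → ℝ}

theorem condEntropyOf_le_binEntropy_add (hp0 : ∀ ω, 0 ≤ p ω) (hp1 : ∑ ω, p ω = 1)
    (U : Ω → α) (V : Ω → β) (φ : β → α) :
    condEntropyOf p U V ≤ binEntropy (probOf p {ω | U ω ≠ φ (V ω)}) +
      probOf p {ω | U ω ≠ φ (V ω)} * log (Fintype.card α) := by
  set P : β → ℝ := fun v => probOf p {ω | V ω = v}
  set q : β → ℝ := fun v => 1 - condProb p {ω | U ω = φ v} {ω | V ω = v}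
  set f : ℝ → ℝ := fun t => binEntropy t + t * log (Fintype.card α)
  have hf : ConcaveOn ℝ (Set.Icc 0 1) f :=
    strictConcave_binEntropy.concaveOn.add
      (((LinearMap.mul ℝ ℝ).flip (log (Fintype.card α))).concaveOn (convex_Icc 0 1))
  have hq : ∀ v, q v ∈ Set.Icc 0 1 := fun v =>
    ⟨sub_nonneg.mpr (condProb_le_one hp0 _ _), sub_le_self _ (condProb_nonneg hp0 _ _)⟩
  have herr : ∑ v, P v * q v = probOf p {ω | U ω ≠ φ (V ω)} := by
    simp only [P, q, mul_sub, mul_one, sum_sub_distrib, sum_probOf_fiber hp1,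
      sum_probOf_mul_condProb_comp hp0]
    exact (probOf_compl hp1 _).symm
  calc condEntropyOf p U V
      = ∑ v, P v * ∑ a, negMulLog (condProb p {ω | U ω = a} {ω | V ω = v}) :=
        condEntropyOf_eq_sum hp0 U V
    _ ≤ ∑ v, P v * f (q v) := by
        refine sum_le_sum fun v _ => ?_
        by_cases hv : P v = 0
        · simp [hv]
        · exact mul_le_mul_of_nonneg_left (sum_negMulLog_le_binEntropy_add
            (fun a => condProb_nonneg hp0 _ _) (sum_condProb_fiber U hv) (φ v))
            (probOf_nonneg hp0 _)
    _ ≤ f (∑ v, P v * q v) := by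
        simpa using hf.le_map_sum (t := univ) (fun v _ => probOf_nonneg hp0 _)
          (sum_probOf_fiber hp1 V) (fun v _ => hq v)
    _ = _ := by rw [herr]

end Fano

section PosteriorSampling

variable {Ω α β : Type*} [Fintype Ω] [Fintype α] [Fintype β] {p : Ω → ℝ}

/-- The probability that a symbol drawn from the posterior of `U` given `V` equals `U`. -/
noncomputable def posteriorMatchProb (p : Ω → ℝ) (U : Ω → α) (V : Ω → β) : ℝ :=
  ∑ ω, p ω * condProb p {ω' | U ω' = U ω} {ω' | V ω' = V ω}

lemma posteriorMatchProb_le_probOf_eq (hp0 : ∀ ω, 0 ≤ p ω) (U : Ω → α) (V : Ω → β)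
    {φ : β → α}
    (hφ : ∀ v a, condProb p {ω | U ω = a} {ω | V ω = v} ≤
      condProb p {ω | U ω = φ v} {ω | V ω = v}) :
    posteriorMatchProb p U V ≤ probOf p {ω | U ω = φ (V ω)} :=
  calc posteriorMatchProb p U V
      ≤ ∑ ω, p ω * condProb p {ω' | U ω' = φ (V ω)} {ω' | V ω' = V ω} :=
        sum_le_sum fun ω _ => mul_le_mul_of_nonneg_left (hφ _ _) (hp0 ω)
    _ = ∑ v, probOf p {ω | V ω = v} * condProb p {ω | U ω = φ v} {ω | V ω = v} :=
        (sum_probOf_fiber_mul V fun v => condProb p {ω | U ω = φ v} {ω | V ω = v}).symm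
    _ = probOf p {ω | U ω = φ (V ω)} := sum_probOf_mul_condProb_comp hp0 U V φ

theorem condEntropyOf_le_of_one_sub_le_posteriorMatchProb [Nonempty α]
    (hp0 : ∀ ω, 0 ≤ p ω) (hp1 : ∑ ω, p ω = 1) (U : Ω → α) (V : Ω → β) {E : ℝ}
    (hE : 1 - E ≤ posteriorMatchProb p U V) (hE2 : E ≤ 1 / 2) :
    condEntropyOf p U V ≤ binEntropy E + E * log (Fintype.card α) := by
  choose φ hφ using fun v : β =>
    Finite.exists_max fun a => condProb p {ω | U ω = a} {ω | V ω = v}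
  set e := probOf p {ω | U ω ≠ φ (V ω)}
  have he0 : 0 ≤ e := probOf_nonneg hp0 _
  -- the maximum-a-posteriori guess `φ` errs less often than posterior sampling
  have heE : e ≤ E := by
    have hcompl : e = 1 - probOf p {ω | U ω = φ (V ω)} := probOf_compl hp1 _
    linarith [posteriorMatchProb_le_probOf_eq hp0 U V fun v a => hφ v a]
  have hbin : binEntropy e ≤ binEntropy E :=
    binEntropy_strictMonoOn.monotoneOn ⟨he0, by linarith⟩ ⟨he0.trans heE, by linarith⟩ heE
  calc condEntropyOf p U V ≤ binEntropy e + e * log (Fintype.card α) :=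
        condEntropyOf_le_binEntropy_add hp0 hp1 U V φ
    _ ≤ binEntropy E + E * log (Fintype.card α) := by gcongr

end PosteriorSampling

section SuccessiveCancellation

variable {Ω 𝒳 𝒴 : Type*} [Fintype Ω] [Fintype 𝒳] [Fintype 𝒴] {p : Ω → ℝ} {n : ℕ}

lemma probOf_scStep_correct_le_posteriorMatchProb (hp0 : ∀ ω, 0 ≤ p ω)
    (X : Ω → (Fin n → 𝒳)) (Y : Ω → (Fin n → 𝒴)) (Chat : Ω → (Fin n → 𝒳))
    (T : (Fin n → 𝒳) → (Fin n → 𝒳)) (i : Fin n)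
    (hstep : ∀ (cp : Fin i.1 → 𝒳) (y : Fin n → 𝒴),
      0 < probOf p {ω | prefixVec (T (X ω)) i.1 i.2.le = cp ∧ Y ω = y} →
      ∀ (a : 𝒳) (x : Fin n → 𝒳),
        probOf p {ω | Chat ω i = a ∧ X ω = x ∧ prefixVec (Chat ω) i.1 i.2.le = cp ∧ Y ω = y} =
          condProb p {ω | T (X ω) i = a}
              {ω | prefixVec (T (X ω)) i.1 i.2.le = cp ∧ Y ω = y} *
            probOf p {ω | X ω = x ∧ prefixVec (Chat ω) i.1 i.2.le = cp ∧ Y ω = y}) :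
    probOf p {ω | Chat ω i = T (X ω) i ∧
        prefixVec (Chat ω) i.1 i.2.le = prefixVec (T (X ω)) i.1 i.2.le} ≤
      posteriorMatchProb p (fun ω => T (X ω) i)
        (fun ω => (prefixVec (T (X ω)) i.1 i.2.le, Y ω)) := by
  set D := {ω | Chat ω i = T (X ω) i ∧
    prefixVec (Chat ω) i.1 i.2.le = prefixVec (T (X ω)) i.1 i.2.le}
  set g : (Fin n → 𝒳) × (Fin n → 𝒴) → ℝ := fun s =>
    condProb p {ω | T (X ω) i = T s.1 i}
      {ω | prefixVec (T (X ω)) i.1 i.2.le = prefixVec (T s.1) i.1 i.2.le ∧ Y ω = s.2}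
  have hterm : ∀ s, probOf p (D ∩ {ω | (X ω, Y ω) = s}) ≤
      probOf p {ω | (X ω, Y ω) = s} * g s := by
    rintro ⟨x, y⟩
    have hD : D ∩ {ω | (X ω, Y ω) = (x, y)} = {ω | Chat ω i = T x i ∧ X ω = x ∧
        prefixVec (Chat ω) i.1 i.2.le = prefixVec (T x) i.1 i.2.le ∧ Y ω = y} := by
      ext ω
      simp only [D, Set.mem_inter_iff, Set.mem_ofPred_eq, Prod.mk.injEq]
      constructor
      · rintro ⟨⟨hi, hpre⟩, rfl, rfl⟩
        exact ⟨hi, rfl, hpre, rfl⟩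
      · rintro ⟨hi, rfl, hpre, rfl⟩
        exact ⟨⟨hi, hpre⟩, rfl, rfl⟩
    rw [hD]
    by_cases hpos : 0 < probOf p
      {ω | prefixVec (T (X ω)) i.1 i.2.le = prefixVec (T x) i.1 i.2.le ∧ Y ω = y}
    · rw [hstep _ y hpos]
      refine (mul_le_mul_of_nonneg_left (probOf_mono hp0 ?_) (condProb_nonneg hp0 _ _)).trans_eq
        (mul_comm _ _)
      rintro ω ⟨rfl, -, rfl⟩
      rfl
    · have hnull := le_antisymm (not_lt.mp hpos) (probOf_nonneg hp0 _)
      refine (probOf_eq_zero_of_subset hp0 ?_ hnull).trans_le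
        (mul_nonneg (probOf_nonneg hp0 _) (condProb_nonneg hp0 _ _))
      rintro ω ⟨-, rfl, -, rfl⟩
      exact ⟨rfl, rfl⟩
  calc probOf p D
      = ∑ s, probOf p (D ∩ {ω | (X ω, Y ω) = s}) := (sum_probOf_inter_fiber D _).symm
    _ ≤ ∑ s, probOf p {ω | (X ω, Y ω) = s} * g s := sum_le_sum fun s _ => hterm s
    _ = ∑ ω, p ω * g (X ω, Y ω) := sum_probOf_fiber_mul _ g
    _ = _ := by simp only [posteriorMatchProb, g, Prod.mk.injEq]

end SuccessiveCancellation

theorem stmt10_general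
    {Ω 𝒳 𝒴 : Type*} [Fintype Ω] [Fintype 𝒳] [Fintype 𝒴]
    (hcard : 2 ≤ Fintype.card 𝒳)
    (n : ℕ)
    (p : Ω → ℝ) (hp0 : ∀ ω, 0 ≤ p ω) (hp1 : ∑ ω, p ω = 1)
    (X : Ω → (Fin n → 𝒳)) (Y : Ω → (Fin n → 𝒴)) (Chat : Ω → (Fin n → 𝒳))
    (I0 : Finset (Fin n))
    (T : (Fin n → 𝒳) ≃ (Fin n → 𝒳))
    (hstep : ∀ i ∈ I0, ∀ (cp : Fin i.1 → 𝒳) (y : Fin n → 𝒴),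
      0 < probOf p {ω | prefixVec (T (X ω)) i.1 i.2.le = cp ∧ Y ω = y} →
      ∀ (a : 𝒳) (x : Fin n → 𝒳),
        probOf p {ω | Chat ω i = a ∧ X ω = x ∧ prefixVec (Chat ω) i.1 i.2.le = cp ∧ Y ω = y} =
          condProb p {ω | T (X ω) i = a}
              {ω | prefixVec (T (X ω)) i.1 i.2.le = cp ∧ Y ω = y} *
            probOf p {ω | X ω = x ∧ prefixVec (Chat ω) i.1 i.2.le = cp ∧ Y ω = y})
    (E : ℝ)
    (hE : E = probOf p {ω | T.symm (Chat ω) ≠ X ω})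
    (hhalf : E ≤ 1 / 2) :
    ∑ i ∈ I0,
        condEntropyOf p (fun ω => T (X ω) i)
          (fun ω => (prefixVec (T (X ω)) i.1 i.2.le, Y ω)) /
            Real.log (Fintype.card 𝒳) ≤
      (n : ℝ) * (E +
        (Real.negMulLog E + Real.negMulLog (1 - E)) / Real.log (Fintype.card 𝒳)) := by
  have : Nonempty 𝒳 := Fintype.card_pos_iff.mp (by omega)
  have hlog : 0 < log (Fintype.card 𝒳) := log_pos (by exact_mod_cast hcard)
  have hE0 : 0 ≤ E := hE ▸ probOf_nonneg hp0 _
  have hsuccess : 1 - E = probOf p {ω | T.symm (Chat ω) = X ω} := by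
    rw [hE, ← probOf_compl hp1]
    congr 1
    ext
    simp
  have hcoord : ∀ i ∈ I0, condEntropyOf p (fun ω => T (X ω) i)
      (fun ω => (prefixVec (T (X ω)) i.1 i.2.le, Y ω)) / log (Fintype.card 𝒳) ≤
      E + binEntropy E / log (Fintype.card 𝒳) := fun i hi => by
    rw [div_le_iff₀ hlog, add_mul, div_mul_cancel₀ _ hlog.ne', add_comm]
    refine condEntropyOf_le_of_one_sub_le_posteriorMatchProb hp0 hp1 _ _ ?_ hhalf
    refine hsuccess.trans_le ((probOf_mono hp0 fun ω hω => ?_).trans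
      (probOf_scStep_correct_le_posteriorMatchProb hp0 X Y Chat T i (hstep i hi)))
    have hC : Chat ω = T (X ω) := T.symm_apply_eq.mp hω
    simp [hC]
  calc _ ≤ ∑ _i ∈ I0, (E + binEntropy E / log (Fintype.card 𝒳)) := sum_le_sum hcoord
    _ ≤ (n : ℝ) * (E + binEntropy E / log (Fintype.card 𝒳)) := by
        rw [sum_const, nsmul_eq_mul]
        gcongr
        · exact add_nonneg hE0 (div_nonneg (binEntropy_nonneg hE0 (by linarith)) hlog.le)
        · simpa using card_le_univ I0
    _ = _ := by rw [binEntropy_eq_negMulLog_add_negMulLog_one_sub]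

/-- for the stochastic SC decoder `Ĉ` (arbitrary partition), with
`E = Prob(T⁻¹(Ĉ) ≠ X) ≤ 1/2`, one has
`Σ_{i ∈ I0} H(C_i|C_1^{i-1},Y) ≤ n (E + h(E))`, entropies in base `|𝒳|`. -/
theorem stmt10
    {Ω 𝒳 𝒴 : Type*} [Fintype Ω] [Fintype 𝒳] [Fintype 𝒴]
    (hcard : 2 ≤ Fintype.card 𝒳)
    (n l : ℕ) (hl : l ≤ n)
    (p : Ω → ℝ) (hp0 : ∀ ω, 0 ≤ p ω) (hp1 : ∑ ω, p ω = 1)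
    (X : Ω → (Fin n → 𝒳)) (Y : Ω → (Fin n → 𝒴)) (Chat : Ω → (Fin n → 𝒳))
    (A : (Fin n → 𝒳) → (Fin l → 𝒳)) (B : (Fin n → 𝒳) → (Fin (n - l) → 𝒳))
    (I1 I0 : Finset (Fin n))
    (hdisj : Disjoint I1 I0) (huniv : I1 ∪ I0 = Finset.univ)
    (hc1 : I1.card = l) (hc0 : I0.card = n - l)
    (T : (Fin n → 𝒳) ≃ (Fin n → 𝒳))
    (hT1 : ∀ x (j : Fin l), T x (I1.orderIsoOfFin hc1 j).1 = A x j)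
    (hT0 : ∀ x (j : Fin (n - l)), T x (I0.orderIsoOfFin hc0 j).1 = B x j)
    (hkeep : ∀ ω, ∀ i ∈ I1, Chat ω i = T (X ω) i)
    (hstep : ∀ i ∈ I0, ∀ (cp : Fin i.1 → 𝒳) (y : Fin n → 𝒴),
      0 < probOf p {ω | prefixVec (T (X ω)) i.1 i.2.le = cp ∧ Y ω = y} →
      ∀ (a : 𝒳) (x : Fin n → 𝒳),
        probOf p {ω | Chat ω i = a ∧ X ω = x ∧ prefixVec (Chat ω) i.1 i.2.le = cp ∧ Y ω = y} =
          condProb p {ω | T (X ω) i = a}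
              {ω | prefixVec (T (X ω)) i.1 i.2.le = cp ∧ Y ω = y} *
            probOf p {ω | X ω = x ∧ prefixVec (Chat ω) i.1 i.2.le = cp ∧ Y ω = y})
    (E : ℝ)
    (hE : E = probOf p {ω | T.symm (Chat ω) ≠ X ω})
    (hhalf : E ≤ 1 / 2) :
    ∑ i ∈ I0,
        condEntropyOf p (fun ω => T (X ω) i)
          (fun ω => (prefixVec (T (X ω)) i.1 i.2.le, Y ω)) /
            Real.log (Fintype.card 𝒳) ≤
      (n : ℝ) * (E +
        (Real.negMulLog E + Real.negMulLog (1 - E)) / Real.log (Fintype.card 𝒳)) :=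
  stmt10_general hcard n p hp0 hp1 X Y Chat I0 T hstep E hE hhalf
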